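/- For every odd prime p and every even m with 2 ≤ m ≤ p-3, S_m = ∑_{l=1}^{p-1} l^m ≡ p·B_m mod p² (in Z_p), where B_m is the m-th Bernoulli number. -/

import Mathlib

/-!
Faulhaber's formula splits off the top term:
`∑_{k<p} k^m = p B_m + ∑_{i<m} B_i C(m+1,i) p^(m+1-i) / (m+1)`.
Since `m + 1 < p`, the denominator is a `p`-adic unit and every exponent `m + 1 - i` is at least 2,
so the tail is divisible by `p²` as soon as `B_i` is `p`-integral for `i < m`. That integrality
follows from the same formula by strong induction: for `n < p - 1` the power sum `∑_{k<p} k^n`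
vanishes in `𝔽_p`, so `p B_n` has norm at most `‖p‖`.
-/

open Finset

theorem ZMod.sum_eq_sum_range_natCast {M : Type*} [AddCommMonoid M] (n : ℕ) [NeZero n]
    (f : ZMod n → M) : ∑ x : ZMod n, f x = ∑ k ∈ range n, f k :=
  sum_nbij' ZMod.val Nat.cast (fun x _ => mem_range.2 x.val_lt) (fun _ _ => mem_univ _)
    (fun x _ => x.natCast_zmod_val) (fun _ hk => ZMod.val_cast_of_lt (mem_range.1 hk))
    (fun x _ => by rw [x.natCast_zmod_val])

theorem Finset.sum_Icc_one_sub_one_eq_sum_range {M : Type*} [AddCommMonoid M] {f : ℕ → M}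
    (hf : f 0 = 0) (n : ℕ) : ∑ k ∈ Icc 1 (n - 1), f k = ∑ k ∈ range n, f k := by
  cases n with
  | zero => simp
  | succ n =>
    rw [sum_range_succ', hf, add_zero, ← Ico_add_one_right_eq_Icc, sum_Ico_eq_sum_range]
    simp [add_comm]

noncomputable def faulhaberTail (K : Type*) [Field K] (m : ℕ) (x : K) : K :=
  ∑ i ∈ range m, (bernoulli i : K) * (m + 1).choose i * x ^ (m + 1 - i) / (m + 1)

theorem sum_range_pow_eq_mul_bernoulli_add_faulhaberTail {K : Type*} [Field K] [CharZero K]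
    (n m : ℕ) : ∑ k ∈ range n, (k : K) ^ m = n * bernoulli m + faulhaberTail K m n := by
  have h := congrArg (Rat.cast : ℚ → K) (sum_range_pow n m)
  push_cast at h
  rw [h, sum_range_succ, faulhaberTail, add_comm, Nat.choose_succ_self_right, add_tsub_cancel_left]
  push_cast
  field_simp

namespace Padic

variable {p : ℕ} [hp : Fact p.Prime]

theorem norm_natCast_eq_one_of_lt {n : ℕ} (h0 : n ≠ 0) (hn : n < p) : ‖(n : ℚ_[p])‖ = 1 :=
  norm_natCast_eq_one_iff.2 (Nat.coprime_of_lt_prime h0 hn hp.out)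

theorem norm_sum_range_pow_le {n : ℕ} (hn : n < p - 1) :
    ‖∑ k ∈ range p, (k : ℚ_[p]) ^ n‖ ≤ ‖(p : ℚ_[p])‖ := by
  have hdvd : (p : ℤ) ∣ ∑ k ∈ range p, (k : ℤ) ^ n := by
    rw [← ZMod.intCast_zmod_eq_zero_iff_dvd]
    push_cast
    rw [← ZMod.sum_eq_sum_range_natCast p (· ^ n)]
    exact FiniteField.sum_pow_lt_card_sub_one (K := ZMod p) n (by rwa [ZMod.card])
  have := (norm_int_le_pow_iff_dvd _ 1).2 (by simpa using hdvd)
  push_cast at this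
  simpa [norm_p] using this

theorem norm_faulhaberTail_le {m : ℕ} (hm : m + 1 < p)
    (hB : ∀ i < m, ‖(bernoulli i : ℚ_[p])‖ ≤ 1) :
    ‖faulhaberTail ℚ_[p] m p‖ ≤ ‖(p : ℚ_[p])‖ ^ 2 := by
  refine IsUltrametricDist.norm_sum_le_of_forall_le_of_nonneg (by positivity) fun i hi => ?_
  have hi := mem_range.1 hi
  have hden : ‖(m : ℚ_[p]) + 1‖ = 1 := mod_cast norm_natCast_eq_one_of_lt (m.succ_ne_zero) hm
  rw [norm_div, hden, div_one, norm_mul, norm_mul, norm_pow]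
  have hchoose : ‖((m + 1).choose i : ℚ_[p])‖ ≤ 1 :=
    mod_cast norm_int_le_one (p := p) ((m + 1).choose i)
  have hpow : ‖(p : ℚ_[p])‖ ^ (m + 1 - i) ≤ ‖(p : ℚ_[p])‖ ^ 2 :=
    pow_le_pow_of_le_one (norm_nonneg _) norm_p_lt_one.le (by omega)
  calc _ ≤ 1 * 1 * ‖(p : ℚ_[p])‖ ^ 2 := by gcongr; exact hB i hi
    _ = _ := by ring

theorem norm_bernoulli_le_one {n : ℕ} (hn : n < p - 1) : ‖(bernoulli n : ℚ_[p])‖ ≤ 1 := by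
  induction n using Nat.strong_induction_on with
  | _ n ih =>
  have hsum := sum_range_pow_eq_mul_bernoulli_add_faulhaberTail (K := ℚ_[p]) p n
  have htail := norm_faulhaberTail_le (m := n) (by omega) fun i hi => ih i hi (by omega)
  have hp2 : ‖(p : ℚ_[p])‖ ^ 2 ≤ ‖(p : ℚ_[p])‖ :=
    pow_le_of_le_one (norm_nonneg _) norm_p_lt_one.le two_ne_zero
  have : ‖(p : ℚ_[p])‖ * ‖(bernoulli n : ℚ_[p])‖ ≤ ‖(p : ℚ_[p])‖ * 1 := by
    rw [mul_one, ← norm_mul, eq_sub_of_add_eq hsum.symm, sub_eq_add_neg]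
    exact (IsUltrametricDist.norm_add_le_max _ _).trans
      (max_le (norm_sum_range_pow_le hn) ((norm_neg _).trans_le (htail.trans hp2)))
  exact le_of_mul_le_mul_left this (norm_pos_iff.2 (by exact_mod_cast hp.out.ne_zero))

theorem exists_eq_pow_mul_of_norm_le {x : ℚ_[p]} {k : ℕ} (h : ‖x‖ ≤ ‖(p : ℚ_[p])‖ ^ k) :
    ∃ z : ℤ_[p], x = p ^ k * z := by
  have hp0 : (p : ℚ_[p]) ≠ 0 := by exact_mod_cast hp.out.ne_zero
  refine ⟨⟨x / p ^ k, ?_⟩, ?_⟩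
  · rw [norm_div, norm_pow]
    exact div_le_one_of_le₀ h (by positivity)
  · show x = p ^ k * (x / p ^ k)
    field_simp

end Padic

theorem stmt_13_general (p m : ℕ) [hp : Fact p.Prime]
    (hm2 : 2 ≤ m) (hm3 : m ≤ p - 3) :
    ∃ z : ℤ_[p], (∑ l ∈ Finset.Icc 1 (p - 1), (l : ℚ_[p]) ^ m) =
      (p : ℚ_[p]) * (bernoulli m : ℚ_[p]) + (p : ℚ_[p]) ^ 2 * z := by
  obtain ⟨z, hz⟩ := Padic.exists_eq_pow_mul_of_norm_le <|
    Padic.norm_faulhaberTail_le (p := p) (m := m) (by omega) fun i _ =>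
      Padic.norm_bernoulli_le_one (n := i) (by omega)
  refine ⟨z, ?_⟩
  rw [sum_Icc_one_sub_one_eq_sum_range (zero_pow (by omega)),
    sum_range_pow_eq_mul_bernoulli_add_faulhaberTail, hz]

theorem stmt_13 (p m : ℕ) [hp : Fact p.Prime] (hodd : Odd p)
    (hm : Even m) (hm2 : 2 ≤ m) (hm3 : m ≤ p - 3) :
    ∃ z : ℤ_[p], (∑ l ∈ Finset.Icc 1 (p - 1), (l : ℚ_[p]) ^ m) =
      (p : ℚ_[p]) * (bernoulli m : ℚ_[p]) + (p : ℚ_[p]) ^ 2 * z :=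
  stmt_13_general p m (hp := hp) hm2 hm3
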